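/- Let Ṡ = ∏_{j=1}^m X_j − p_1(1 + ∑_{j=1}^m μ_j^{-1}Ẋ_j) and ε_3 = (1/2)∏_{j=1}^m X_j(X_j−1)(X_j−2) − (3/2)(∏_{j=1}^m X_j)(∏_{j=1}^m X_j(X_j−1)) + (∏_{j=1}^m X_j)³. Then E[Ṡ ε_3] = (1/2)p_1³∏_{j=1}^m(3+μ_j) − (3/2)p_1²∏_{j=1}^m(4+5μ_j+μ_j²) + p_1∏_{j=1}^m(1+7μ_j+6μ_j²+μ_j³) − (1/2)p_1⁴ + (3/2)p_1³∏_{j=1}^m(2+μ_j) − p_1²∏_{j=1}^m(1+3μ_j+μ_j²) − (3/2)p_1⁴ s_1 + (3/2)p_1³∑_{j=1}^m μ_j^{-1}(4+3μ_j)∏_{k≠j}(2+μ_k) − p_1²∑_{j=1}^m μ_j^{-1}(1+6μ_j+3μ_j²)∏_{k≠j}(1+3μ_k+μ_k²). -/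

import Mathlib

open MeasureTheory ProbabilityTheory Finset
open scoped NNReal

/-- The law of `m` independent Poisson random variables `X_j ~ Poisson (μ j)`,
as a product measure on `Fin m → ℕ`. -/
noncomputable def poissonPi {m : ℕ} (μ : Fin m → ℝ≥0) : Measure (Fin m → ℕ) :=
  Measure.pi fun j => poissonMeasure (μ j)

/-!
Since `(∏ X_j) (∏ X_j (X_j - 1)) = ∏ X_j² (X_j - 1)` and `(∏ X_j)³ = ∏ X_j³`, the factor `ε₃` is a
linear combination of three products `∏ g (X_j)` of one-coordinate functions, and
`Ṡ = ∏ X_j - p₁ - p₁ ∑ μ_j⁻¹ (X_j - μ_j)`. By independence every expectation of `Ṡ ∏ g (X_j)`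
therefore factorizes into one-dimensional moments `E[g(X)]`, `E[X g(X)]`, `E[(X - μ) g(X)]`, which
are polynomials in `μ` read off from the factorial moments `E[X (X - 1) ⋯ (X - k + 1)] = μ ^ k`.
-/

open Real Nat in
theorem hasSum_poisson_mul_descFactorial (r : ℝ≥0) (k : ℕ) :
    HasSum (fun n ↦ exp (-r) * r ^ n / n ! * (n.descFactorial k : ℝ)) ((r : ℝ) ^ k) := by
  refine (hasSum_nat_add_iff' k).mp ?_
  have hvanish : ∑ n ∈ range k, exp (-r) * r ^ n / n ! * (n.descFactorial k : ℝ) = 0 :=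
    sum_eq_zero fun n hn ↦ by simp [descFactorial_eq_zero_iff_lt.mpr (mem_range.mp hn)]
  rw [hvanish, sub_zero]
  have hexp := (NormedSpace.expSeries_div_hasSum_exp (r : ℝ)).mul_left (exp (-r) * r ^ k)
  rw [← exp_eq_exp_ℝ, mul_right_comm, ← exp_add, neg_add_cancel, exp_zero, one_mul] at hexp
  refine hexp.congr_fun fun n ↦ ?_
  have hfac : (((n + k) ! : ℕ) : ℝ) = n ! * (n + k).descFactorial k := by
    rw [← Nat.cast_mul, ← factorial_mul_descFactorial (le_add_left k n), Nat.add_sub_cancel]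
  rw [hfac, pow_add]
  field_simp

theorem integrable_descFactorial_poissonMeasure (r : ℝ≥0) (k : ℕ) :
    Integrable (fun n : ℕ ↦ (n.descFactorial k : ℝ)) (poissonMeasure r) := by
  rw [integrable_poissonMeasure_iff]
  simpa only [Real.norm_natCast] using (hasSum_poisson_mul_descFactorial r k).summable

theorem integral_descFactorial_poissonMeasure (r : ℝ≥0) (k : ℕ) :
    ∫ n, (n.descFactorial k : ℝ) ∂poissonMeasure r = (r : ℝ) ^ k := by
  rw [integral_poissonMeasure]
  exact (hasSum_poisson_mul_descFactorial r k).tsum_eq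

theorem integrable_and_integral_of_eq_sum_descFactorial {r : ℝ≥0} {f : ℕ → ℝ} {v : ℝ} {K : ℕ}
    (c : Fin K → ℝ) (hf : ∀ n, f n = ∑ k, c k * n.descFactorial k)
    (hv : ∑ k, c k * (r : ℝ) ^ (k : ℕ) = v) :
    Integrable f (poissonMeasure r) ∧ ∫ n, f n ∂poissonMeasure r = v := by
  have hint : ∀ k : Fin K, Integrable (fun n : ℕ ↦ c k * n.descFactorial k) (poissonMeasure r) :=
    fun k ↦ (integrable_descFactorial_poissonMeasure r k).const_mul _
  rw [funext hf]
  refine ⟨integrable_finsetSum _ fun k _ ↦ hint k, ?_⟩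
  rw [integral_finsetSum _ fun k _ ↦ hint k]
  simp only [integral_const_mul, integral_descFactorial_poissonMeasure, hv]

theorem cast_descFactorial_eq_prod_range (n k : ℕ) :
    (n.descFactorial k : ℝ) = ∏ i ∈ range k, ((n : ℝ) - i) := by
  rw [← descPochhammer_eval_eq_descFactorial, descPochhammer_eval_eq_prod_range]

theorem integrable_and_integral_of_eq_quartic {r : ℝ≥0} {f : ℕ → ℝ} {v : ℝ} (a b c d e : ℝ)
    (hf : ∀ n : ℕ, f n = a + b * n + c * (n * (n - 1)) + d * (n * (n - 1) * (n - 2))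
      + e * (n * (n - 1) * (n - 2) * (n - 3)))
    (hv : a + b * r + c * r ^ 2 + d * r ^ 3 + e * r ^ 4 = v) :
    Integrable f (poissonMeasure r) ∧ ∫ n, f n ∂poissonMeasure r = v :=
  integrable_and_integral_of_eq_sum_descFactorial ![a, b, c, d, e]
    (fun n ↦ by
      rw [hf]
      simp only [Fin.sum_univ_succ, Fin.sum_univ_zero, Matrix.cons_val_zero, Matrix.cons_val_succ,
        Fin.val_zero, Fin.val_succ, cast_descFactorial_eq_prod_range, prod_range_succ,
        prod_range_zero, Nat.cast_add, Nat.cast_zero, Nat.cast_one]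
      ring)
    (by
      rw [← hv]
      simp only [Fin.sum_univ_succ, Fin.sum_univ_zero, Matrix.cons_val_zero, Matrix.cons_val_succ,
        Fin.val_zero, Fin.val_succ]
      ring)

section Product

variable {ι E : Type*} [Fintype ι] [DecidableEq ι] {mE : MeasurableSpace E}
  {ν : ι → Measure E} [∀ i, SigmaFinite (ν i)]

theorem prod_update_eq_mul_prod_erase {α M : Type*} [CommMonoid M] (f : ι → α) (j : ι) (a : α)
    (φ : ι → α → M) :
    ∏ i, φ i (Function.update f j a i) = φ j a * ∏ i ∈ univ.erase j, φ i (f i) := by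
  rw [← mul_prod_erase univ _ (mem_univ j), Function.update_self]
  congr 1
  exact prod_congr rfl fun i hi ↦ by rw [Function.update_of_ne (ne_of_mem_erase hi)]

theorem mul_prod_eq_prod_update (h : E → ℝ) (f : ι → E → ℝ) (j : ι) (x : ι → E) :
    h (x j) * ∏ i, f i (x i) = ∏ i, Function.update f j (fun y ↦ h y * f j y) i (x i) := by
  rw [prod_update_eq_mul_prod_erase f j _ fun i u ↦ u (x i), ← mul_prod_erase univ _ (mem_univ j),
    mul_assoc]

theorem integrable_mul_prod_pi (h : E → ℝ) (f : ι → E → ℝ) (j : ι)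
    (hf : ∀ i, Integrable (f i) (ν i)) (hhf : Integrable (fun y ↦ h y * f j y) (ν j)) :
    Integrable (fun x : ι → E ↦ h (x j) * ∏ i, f i (x i)) (Measure.pi ν) := by
  simp_rw [mul_prod_eq_prod_update h f j]
  refine Integrable.fintype_prod fun i ↦ ?_
  rcases eq_or_ne i j with rfl | hij
  · simpa using hhf
  · simpa [Function.update_of_ne hij] using hf i

theorem integral_mul_prod_pi (h : E → ℝ) (f : ι → E → ℝ) (j : ι) :
    ∫ x : ι → E, h (x j) * ∏ i, f i (x i) ∂Measure.pi ν
      = (∫ y, h y * f j y ∂ν j) * ∏ i ∈ univ.erase j, ∫ y, f i y ∂ν i := by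
  simp_rw [mul_prod_eq_prod_update h f j, integral_fintype_prod_eq_prod,
    prod_update_eq_mul_prod_erase f j _ fun i u ↦ ∫ y, u y ∂ν i]

end Product

section SDot

variable {m : ℕ} (μ : Fin m → ℝ≥0)

noncomputable def sDot (x : Fin m → ℕ) : ℝ :=
  ∏ j, (x j : ℝ) - (∏ j, (μ j : ℝ)) * (1 + ∑ j, ((μ j : ℝ))⁻¹ * ((x j : ℝ) - (μ j : ℝ)))

noncomputable def epsThree (x : Fin m → ℕ) : ℝ :=
  (1/2 : ℝ) * ∏ j, ((x j : ℝ) * ((x j : ℝ) - 1) * ((x j : ℝ) - 2))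
    - (3/2 : ℝ) * (∏ j, (x j : ℝ)) * (∏ j, ((x j : ℝ) * ((x j : ℝ) - 1))) + (∏ j, (x j : ℝ)) ^ 3

theorem epsThree_eq (x : Fin m → ℕ) :
    epsThree x = (1/2 : ℝ) * ∏ j, ((x j : ℝ) * ((x j : ℝ) - 1) * ((x j : ℝ) - 2))
      - (3/2 : ℝ) * ∏ j, ((x j : ℝ) * ((x j : ℝ) * ((x j : ℝ) - 1))) + ∏ j, (x j : ℝ) ^ 3 := by
  rw [epsThree, ← prod_pow, mul_assoc _ (∏ j, (x j : ℝ)), ← prod_mul_distrib]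

theorem sDot_mul_prod (g : ℕ → ℝ) (x : Fin m → ℕ) :
    sDot μ x * ∏ k, g (x k) = ∏ k, (x k : ℝ) * g (x k) - (∏ j, (μ j : ℝ)) * ∏ k, g (x k)
      - (∏ j, (μ j : ℝ)) * ∑ j, ((μ j : ℝ))⁻¹ * (((x j : ℝ) - μ j) * ∏ k, g (x k)) := by
  simp only [sDot, prod_mul_distrib, ← mul_assoc, ← sum_mul]
  ring

theorem integral_sDot_mul_prod (g : ℕ → ℝ) (hg : ∀ j, Integrable g (poissonMeasure (μ j)))
    (hXg : ∀ j, Integrable (fun n : ℕ ↦ (n : ℝ) * g n) (poissonMeasure (μ j))) :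
    Integrable (fun x ↦ sDot μ x * ∏ k, g (x k)) (poissonPi μ) ∧
      ∫ x, sDot μ x * ∏ k, g (x k) ∂poissonPi μ
        = ∏ k, (∫ n : ℕ, n * g n ∂poissonMeasure (μ k))
          - (∏ j, (μ j : ℝ)) * ∏ k, (∫ n, g n ∂poissonMeasure (μ k))
          - (∏ j, (μ j : ℝ)) * ∑ j, ((μ j : ℝ))⁻¹
            * ((∫ n : ℕ, (n - μ j) * g n ∂poissonMeasure (μ j))
              * ∏ k ∈ univ.erase j, ∫ n, g n ∂poissonMeasure (μ k)) := by
  have iCent : ∀ j, Integrable (fun n : ℕ ↦ ((n : ℝ) - μ j) * g n) (poissonMeasure (μ j)) :=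
    fun j ↦ ((hXg j).sub ((hg j).const_mul _)).congr (.of_forall fun n ↦ (sub_mul ..).symm)
  have iXG : Integrable (fun x : Fin m → ℕ ↦ ∏ k, (x k : ℝ) * g (x k)) (poissonPi μ) :=
    Integrable.fintype_prod hXg
  have iG : Integrable (fun x : Fin m → ℕ ↦ ∏ k, g (x k)) (poissonPi μ) :=
    Integrable.fintype_prod hg
  have iTerm : ∀ j, Integrable (fun x : Fin m → ℕ ↦
      ((μ j : ℝ))⁻¹ * (((x j : ℝ) - μ j) * ∏ k, g (x k))) (poissonPi μ) := fun j ↦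
    (integrable_mul_prod_pi (fun n : ℕ ↦ (n : ℝ) - μ j) (fun _ ↦ g) j hg (iCent j)).const_mul _
  have iSum := (integrable_finsetSum univ fun j _ ↦ iTerm j).const_mul (∏ j, (μ j : ℝ))
  have iMain : Integrable (fun x : Fin m → ℕ ↦
      ∏ k, (x k : ℝ) * g (x k) - (∏ j, (μ j : ℝ)) * ∏ k, g (x k)) (poissonPi μ) :=
    iXG.sub (iG.const_mul _)
  refine ⟨(iMain.sub iSum).congr (.of_forall fun x ↦ (sDot_mul_prod μ g x).symm), ?_⟩
  simp_rw [sDot_mul_prod]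
  rw [integral_sub iMain iSum, integral_sub iXG (iG.const_mul _),
    integral_const_mul, integral_const_mul, integral_finsetSum _ fun j _ ↦ iTerm j]
  have hj : ∀ j, ∫ x, ((x j : ℝ) - μ j) * ∏ k, g (x k) ∂poissonPi μ
      = (∫ n : ℕ, (n - μ j) * g n ∂poissonMeasure (μ j))
        * ∏ k ∈ univ.erase j, ∫ n, g n ∂poissonMeasure (μ k) :=
    fun j ↦ integral_mul_prod_pi (fun n : ℕ ↦ (n : ℝ) - μ j) (fun _ ↦ g) j
  simp only [integral_const_mul, hj]
  rw [poissonPi, integral_fintype_prod_eq_prod (fun _ (n : ℕ) ↦ (n : ℝ) * g n),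
    integral_fintype_prod_eq_prod (fun _ ↦ g)]

/-- Writing the moments as `r ^ d * _` lets the powers of the `μ j` recombine into a power of
`∏ j, μ j` in every term. -/
theorem integral_sDot_mul_prod_of_moments (g : ℕ → ℝ) (d : ℕ) (α β γ : ℝ → ℝ)
    (hg : ∀ r : ℝ≥0, Integrable g (poissonMeasure r) ∧
      ∫ n, g n ∂poissonMeasure r = (r : ℝ) ^ d * α r)
    (hXg : ∀ r : ℝ≥0, Integrable (fun n : ℕ ↦ (n : ℝ) * g n) (poissonMeasure r) ∧
      ∫ n : ℕ, n * g n ∂poissonMeasure r = (r : ℝ) ^ d * β r)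
    (hγ : ∀ r, β r - r * α r = γ r) :
    Integrable (fun x ↦ sDot μ x * ∏ k, g (x k)) (poissonPi μ) ∧
      ∫ x, sDot μ x * ∏ k, g (x k) ∂poissonPi μ
        = (∏ j, (μ j : ℝ)) ^ d * (∏ k, β (μ k) - (∏ j, (μ j : ℝ)) * ∏ k, α (μ k)
          - (∏ j, (μ j : ℝ)) * ∑ j, ((μ j : ℝ))⁻¹ * γ (μ j) * ∏ k ∈ univ.erase j, α (μ k)) := by
  obtain ⟨hint, hval⟩ := integral_sDot_mul_prod μ g (fun j ↦ (hg _).1) (fun j ↦ (hXg _).1)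
  refine ⟨hint, ?_⟩
  have hcentered : ∀ r : ℝ≥0, ∫ n : ℕ, (n - r) * g n ∂poissonMeasure r = (r : ℝ) ^ d * γ r := by
    intro r
    simp_rw [sub_mul]
    rw [integral_sub (hXg r).1 ((hg r).1.const_mul _), integral_const_mul, (hg r).2, (hXg r).2,
      ← hγ]
    ring
  have hsum : ∑ j, ((μ j : ℝ))⁻¹ * ((μ j : ℝ) ^ d * γ (μ j)
        * ((∏ k ∈ univ.erase j, (μ k : ℝ)) ^ d * ∏ k ∈ univ.erase j, α (μ k)))
      = (∏ j, (μ j : ℝ)) ^ d * ∑ j, ((μ j : ℝ))⁻¹ * γ (μ j) * ∏ k ∈ univ.erase j, α (μ k) := by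
    rw [mul_sum]
    refine sum_congr rfl fun j _ ↦ ?_
    rw [← mul_prod_erase univ (fun k ↦ (μ k : ℝ)) (mem_univ j)]
    ring
  simp only [hval, (hg _).2, (hXg _).2, hcentered, prod_mul_distrib, prod_pow, hsum]
  ring

end SDot

theorem expectation_Sdot_eps3_general (m : ℕ) (μ : Fin m → ℝ≥0) :
    ∫ x : Fin m → ℕ, (∏ j, (x j : ℝ) - (∏ j, (μ j : ℝ)) * (1 + ∑ j, ((μ j : ℝ))⁻¹ * ((x j : ℝ) - (μ j : ℝ)))) * ((1/2 : ℝ) * ∏ j, ((x j : ℝ) * ((x j : ℝ) - 1) * ((x j : ℝ) - 2)) - (3/2 : ℝ) * (∏ j, (x j : ℝ)) * (∏ j, ((x j : ℝ) * ((x j : ℝ) - 1))) + (∏ j, (x j : ℝ)) ^ 3) ∂(poissonPi μ)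
      = (1/2 : ℝ) * (∏ j, (μ j : ℝ)) ^ 3 * ∏ j, (3 + (μ j : ℝ)) - (3/2 : ℝ) * (∏ j, (μ j : ℝ)) ^ 2 * ∏ j, (4 + 5 * (μ j : ℝ) + (μ j : ℝ) ^ 2) + (∏ j, (μ j : ℝ)) * ∏ j, (1 + 7 * (μ j : ℝ) + 6 * (μ j : ℝ) ^ 2 + (μ j : ℝ) ^ 3) - (1/2 : ℝ) * (∏ j, (μ j : ℝ)) ^ 4 + (3/2 : ℝ) * (∏ j, (μ j : ℝ)) ^ 3 * ∏ j, (2 + (μ j : ℝ)) - (∏ j, (μ j : ℝ)) ^ 2 * ∏ j, (1 + 3 * (μ j : ℝ) + (μ j : ℝ) ^ 2) - (3/2 : ℝ) * (∏ j, (μ j : ℝ)) ^ 4 * (∑ j, ((μ j : ℝ))⁻¹) + (3/2 : ℝ) * (∏ j, (μ j : ℝ)) ^ 3 * ∑ j, ((μ j : ℝ))⁻¹ * (4 + 3 * (μ j : ℝ)) * ∏ k ∈ univ.erase j, (2 + (μ k : ℝ)) - (∏ j, (μ j : ℝ)) ^ 2 * ∑ j, ((μ j : ℝ))⁻¹ *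 (1 + 6 * (μ j : ℝ) + 3 * (μ j : ℝ) ^ 2) * ∏ k ∈ univ.erase j, (1 + 3 * (μ k : ℝ) + (μ k : ℝ) ^ 2) := by
  obtain ⟨i1, e1⟩ := integral_sDot_mul_prod_of_moments μ (fun n ↦ (n : ℝ) * (n - 1) * (n - 2)) 3
    (fun _ ↦ 1) (fun r ↦ 3 + r) (fun _ ↦ 3)
    (fun _ ↦ integrable_and_integral_of_eq_quartic 0 0 0 1 0 (fun _ ↦ by ring) (by ring))
    (fun _ ↦ integrable_and_integral_of_eq_quartic 0 0 0 3 1 (fun _ ↦ by ring) (by ring))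
    (fun _ ↦ by ring)
  obtain ⟨i2, e2⟩ := integral_sDot_mul_prod_of_moments μ (fun n ↦ (n : ℝ) * (n * (n - 1))) 2
    (fun r ↦ 2 + r) (fun r ↦ 4 + 5 * r + r ^ 2) (fun r ↦ 4 + 3 * r)
    (fun _ ↦ integrable_and_integral_of_eq_quartic 0 0 2 1 0 (fun _ ↦ by ring) (by ring))
    (fun _ ↦ integrable_and_integral_of_eq_quartic 0 0 4 5 1 (fun _ ↦ by ring) (by ring))
    (fun _ ↦ by ring)
  obtain ⟨i3, e3⟩ := integral_sDot_mul_prod_of_moments μ (fun n ↦ (n : ℝ) ^ 3) 1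
    (fun r ↦ 1 + 3 * r + r ^ 2) (fun r ↦ 1 + 7 * r + 6 * r ^ 2 + r ^ 3)
    (fun r ↦ 1 + 6 * r + 3 * r ^ 2)
    (fun _ ↦ integrable_and_integral_of_eq_quartic 0 1 3 1 0 (fun _ ↦ by ring) (by ring))
    (fun _ ↦ integrable_and_integral_of_eq_quartic 0 1 7 6 1 (fun _ ↦ by ring) (by ring))
    (fun _ ↦ by ring)
  change ∫ x, sDot μ x * epsThree x ∂poissonPi μ = _
  have hsplit : ∀ x, sDot μ x * epsThree x
      = 1/2 * (sDot μ x * ∏ k, ((x k : ℝ) * (x k - 1) * (x k - 2)))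
        - 3/2 * (sDot μ x * ∏ k, ((x k : ℝ) * (x k * (x k - 1)))) + sDot μ x * ∏ k, (x k : ℝ) ^ 3 :=
    fun x ↦ by rw [epsThree_eq]; ring
  simp_rw [hsplit]
  rw [integral_add ?_ i3, integral_sub (i1.const_mul _) (i2.const_mul _), integral_const_mul,
    integral_const_mul, e1, e2, e3]
  · simp only [prod_const_one, mul_one, ← sum_mul]
    ring
  · exact (i1.const_mul _).sub (i2.const_mul _)

theorem expectation_Sdot_eps3 (m : ℕ) (hm : 2 ≤ m) (μ : Fin m → ℝ≥0) (hμ : ∀ j, 0 < μ j) :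
    ∫ x : Fin m → ℕ, (∏ j, (x j : ℝ) - (∏ j, (μ j : ℝ)) * (1 + ∑ j, ((μ j : ℝ))⁻¹ * ((x j : ℝ) - (μ j : ℝ)))) * ((1/2 : ℝ) * ∏ j, ((x j : ℝ) * ((x j : ℝ) - 1) * ((x j : ℝ) - 2)) - (3/2 : ℝ) * (∏ j, (x j : ℝ)) * (∏ j, ((x j : ℝ) * ((x j : ℝ) - 1))) + (∏ j, (x j : ℝ)) ^ 3) ∂(poissonPi μ)
      = (1/2 : ℝ) * (∏ j, (μ j : ℝ)) ^ 3 * ∏ j, (3 + (μ j : ℝ)) - (3/2 : ℝ) * (∏ j, (μ j : ℝ)) ^ 2 * ∏ j, (4 + 5 * (μ j : ℝ) + (μ j : ℝ) ^ 2) + (∏ j, (μ j : ℝ)) * ∏ j, (1 + 7 * (μ j : ℝ) + 6 * (μ j : ℝ) ^ 2 + (μ j : ℝ) ^ 3) - (1/2 : ℝ) * (∏ j, (μ j : ℝ)) ^ 4 + (3/2 : ℝ) * (∏ j, (μ j : ℝ)) ^ 3 * ∏ j, (2 + (μ j : ℝ)) - (∏ j, (μ j : ℝ)) ^ 2 * ∏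 j, (1 + 3 * (μ j : ℝ) + (μ j : ℝ) ^ 2) - (3/2 : ℝ) * (∏ j, (μ j : ℝ)) ^ 4 * (∑ j, ((μ j : ℝ))⁻¹) + (3/2 : ℝ) * (∏ j, (μ j : ℝ)) ^ 3 * ∑ j, ((μ j : ℝ))⁻¹ * (4 + 3 * (μ j : ℝ)) * ∏ k ∈ univ.erase j, (2 + (μ k : ℝ)) - (∏ j, (μ j : ℝ)) ^ 2 * ∑ j, ((μ j : ℝ))⁻¹ * (1 + 6 * (μ j : ℝ) + 3 * (μ j : ℝ) ^ 2) * ∏ k ∈ univ.erase j, (1 + 3 * (μ k : ℝ) + (μ k : ℝ) ^ 2) :=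
  expectation_Sdot_eps3_general m μ
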